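/- Let M = (S, A, X, T, i) be a parametric MDP with induced POMDP M', let p ∈ Dist(X) be a parameter distribution, r : Runs_X → ℝ a measurable objective function, r' = r ∘ f⁻¹, i'(s,x) = i(s)·p(x), and ε ≥ 0. A pMDP policy π_X is expectation ε-optimal for M (i.e., |Val^M(p,r) − E^M_{π_X,i,p}(r)| ≤ ε) if and only if π' = Φ(π_X) = π_X ∘ f⁻¹ is an ε-solution of M' with respect to r' (i.e., |Val^{M'}(r') − E^{M'}_{π',i'}(r')| ≤ ε). -/

import Mathlib

/-!
The map `f` is a measurable bijection from `Runs_X` onto the runs of `M'` that sends `{x} × Cone(h)`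
onto `Cone(f(x, h))`. If a policy `π'` of `M'` agrees with `σ ∘ f⁻¹` on histories, the cone
probabilities of the two induced measures coincide (`i'(s, x) = i(s) p(x)` supplies the factor
`p(x)`), so by uniqueness of measures on the π-system of cones the measure of `π'` is the
push-forward of that of `σ`, and `E(r')` under `π'` equals `E(r)` under `σ`. Every pMDP policy `σ`
has such a partner `Φ(σ)` among the observation-based policies of `M'`, and every
observation-based `π'` the partner `π' ∘ f` among the pMDP policies, so both suprema range over
the same set of values.
-/

open MeasureTheory ENNReal

namespace PMDPEncoding

universe u v w

variable {S : Type u} {A : Type v} {X : Type w}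

/-- An infinite alternating sequence of state-action pairs
(the `k`-th pair consists of the `k`-th state and the `k`-th action of the run). -/
abbrev RunSeq (S : Type u) (A : Type v) := ℕ → S × A

/-- `ρ` is a run of the MDP with transition function `T`:
all transitions have positive probability. -/
def IsRun (T : S → A → PMF S) (ρ : RunSeq S A) : Prop :=
  ∀ k, 0 < T (ρ k).1 (ρ k).2 (ρ (k + 1)).1

/-- A history: a finite list of state-action pairs followed by a final state. -/
abbrev Hist (S : Type u) (A : Type v) := List (S × A) × S

/-- The first state of a history. -/
def Hist.first (h : Hist S A) : S :=
  match h.1 with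
  | [] => h.2
  | p :: _ => p.1

/-- Auxiliary for `IsHist`: validity of the list part of a history with final state `t`. -/
def IsHistL (T : S → A → PMF S) : List (S × A) → S → Prop
  | [], _ => True
  | (s, a) :: rest, t => 0 < T s a (Hist.first (rest, t)) ∧ IsHistL T rest t

/-- `h` is a history (finite prefix of a run) of the MDP with transition function `T`. -/
def IsHist (T : S → A → PMF S) (h : Hist S A) : Prop := IsHistL T h.1 h.2

/-- The set of runs of the MDP with transition function `T`. -/
def Runs (T : S → A → PMF S) := {ρ : RunSeq S A // IsRun T ρ}

/-- The set of (raw) sequences having the history `h` as a prefix. -/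
def ConeSeq (h : Hist S A) : Set (RunSeq S A) :=
  {ρ | (∀ k, (hk : k < h.1.length) → ρ k = h.1[k]'hk) ∧ (ρ h.1.length).1 = h.2}

/-- The cone of a history: the set of runs with prefix `h`. -/
def Cone (T : S → A → PMF S) (h : Hist S A) : Set (Runs T) :=
  {ρ | ρ.1 ∈ ConeSeq h}

/-- The σ-algebra on runs generated by the cones of histories. -/
instance conesAlg (T : S → A → PMF S) : MeasurableSpace (Runs T) :=
  MeasurableSpace.generateFrom {C | ∃ h : Hist S A, IsHist T h ∧ C = Cone T h}

/-- Valid histories of an MDP, as a subtype. -/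
def HistOf (T : S → A → PMF S) := {h : Hist S A // IsHist T h}

/-- Auxiliary function for the probability of a cone:
`pre` is the prefix of the history processed so far. -/
noncomputable def coneProbAux (T : S → A → PMF S) (π : Hist S A → PMF A) :
    List (S × A) → List (S × A) → S → ℝ≥0∞
  | _, [], _ => 1
  | pre, (s, a) :: rest, t =>
      π (pre, s) a * T s a (Hist.first (rest, t)) *
        coneProbAux T π (pre ++ [(s, a)]) rest t

/-- The probability `i(s₀) · ∏_{k<n} π(s₀a₀…s_k)(a_k) · T(s_k,a_k)(s_{k+1})` that the
induced measure of policy `π` and initial distribution `i` assigns to the cone of a history. -/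
noncomputable def coneProb (T : S → A → PMF S) (i : PMF S) (π : Hist S A → PMF A)
    (h : Hist S A) : ℝ≥0∞ :=
  i h.first * coneProbAux T π [] h.1 h.2

/-- The evaluated transition function `T_x` of a pMDP at parameter point `x`. -/
def evalT (T : S → A → X → PMF S) (x : X) : S → A → PMF S := fun s a => T s a x

/-- Runs of a pMDP: pairs `(x, ρ)` of a parameter value `x` and a run `ρ` of `M(x)`. -/
def RunsX (T : S → A → X → PMF S) := {q : X × RunSeq S A // IsRun (evalT T q.1) q.2}

/-- Valid histories of a pMDP: pairs `(x, h)` with `h` a history of `M(x)`. -/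
def HistX (T : S → A → X → PMF S) := {q : X × Hist S A // IsHist (evalT T q.1) q.2}

/-- The generator set `{x} × Cone(h)` of the σ-algebra on the runs of a pMDP. -/
def ConeX (T : S → A → X → PMF S) (x : X) (h : Hist S A) : Set (RunsX T) :=
  {q | q.1.1 = x ∧ q.1.2 ∈ ConeSeq h}

/-- The σ-algebra on the runs of a pMDP generated by the sets `{x} × Cone(h)`. -/
instance conesXAlg (T : S → A → X → PMF S) : MeasurableSpace (RunsX T) :=
  MeasurableSpace.generateFrom
    {C | ∃ (x : X) (h : Hist S A), IsHist (evalT T x) h ∧ C = ConeX T x h}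

/-- The transition function `T'` of the induced POMDP of a pMDP:
`T'((s,x),a)(s',x') = T(s,a)(x)(s') · δ_x(x')`. -/
noncomputable def indT (T : S → A → X → PMF S) : S × X → A → PMF (S × X) :=
  fun sx a => (T sx.1 a sx.2).map fun s' => (s', sx.2)

/-- The observation function of the induced POMDP: `O(s,x) = s`. -/
def obs : S × X → S := Prod.fst

/-- The observation map extended to histories of the induced POMDP. -/
def obsHist : Hist (S × X) A → Hist S A :=
  fun h => (h.1.map fun p => (p.1.1, p.2), h.2.1)

/-- The map `f` on raw sequences: `f(x, s₀·a₀·s₁·⋯) = (s₀,x)·a₀·(s₁,x)·⋯`. -/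
def fSeq (x : X) (ρ : RunSeq S A) : RunSeq (S × X) A :=
  fun k => (((ρ k).1, x), (ρ k).2)

theorem indT_pos {T : S → A → X → PMF S} {s s' : S} {a : A} {x : X}
    (h : 0 < T s a x s') : 0 < indT T (s, x) a (s', x) := by
  have hmem : (s', x) ∈ ((T s a x).map fun u => (u, x)).support := by
    rw [PMF.support_map]
    exact ⟨s', (PMF.mem_support_iff _ _).2 h.ne', rfl⟩
  exact pos_iff_ne_zero.mpr ((PMF.mem_support_iff _ _).1 hmem)

/-- The map `f : Runs_X → Runs'` from the runs of a pMDP to the runs of its induced POMDP. -/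
def fRun (T : S → A → X → PMF S) (q : RunsX T) : Runs (indT T) :=
  ⟨fSeq q.1.1 q.1.2, fun k => indT_pos (q.2 k)⟩

/-- The map `f` on raw histories: `f(x, s₀·a₀·⋯·s_n) = (s₀,x)·a₀·⋯·(s_n,x)`. -/
def fHistSeq (x : X) (h : Hist S A) : Hist (S × X) A :=
  (h.1.map fun p => ((p.1, x), p.2), (h.2, x))

theorem isHist_fHistSeq (T : S → A → X → PMF S) (x : X) :
    ∀ (l : List (S × A)) (t : S), IsHist (evalT T x) (l, t) →
      IsHist (indT T) (fHistSeq x (l, t))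
  | [], _, _ => trivial
  | (s, a) :: rest, t, hv => by
      obtain ⟨h1, h2⟩ := hv
      have hrec := isHist_fHistSeq T x rest t h2
      refine ⟨?_, hrec⟩
      show 0 < indT T (s, x) a (Hist.first ((rest.map fun p => ((p.1, x), p.2)), (t, x)))
      have hfirst : Hist.first ((rest.map fun p => ((p.1, x), p.2) : List ((S × X) × A)), (t, x)) =
          (Hist.first (rest, t), x) := by
        cases rest <;> rfl
      rw [hfirst]
      exact indT_pos h1

/-- The map `f : Hist_X → Hist'` from the histories of a pMDP to the histories of
its induced POMDP. -/
def fHistX (T : S → A → X → PMF S) (q : HistX T) : HistOf (indT T) :=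
  ⟨fHistSeq q.1.1 q.1.2, isHist_fHistSeq T q.1.1 q.1.2.1 q.1.2.2 q.2⟩

/-- Some run of an MDP: start anywhere, always pick a fixed action, and follow the
support of the transition distributions. -/
noncomputable def someRunSeq (T : S → A → PMF S) (sa : S × A) (a : A) : RunSeq S A :=
  fun k => Nat.rec sa (fun _ ih => ((PMF.support_nonempty (T ih.1 ih.2)).some, a)) k

theorem someRunSeq_isRun (T : S → A → PMF S) (sa : S × A) (a : A) :
    IsRun T (someRunSeq T sa a) := by
  intro k
  exact pos_iff_ne_zero.mpr <| (PMF.mem_support_iff _ _).1 <|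
    (PMF.support_nonempty (T (someRunSeq T sa a k).1 (someRunSeq T sa a k).2)).some_mem

instance instNonemptyRuns [Nonempty S] [Nonempty A] (T : S → A → PMF S) :
    Nonempty (Runs T) :=
  ⟨⟨someRunSeq T (Classical.arbitrary S, Classical.arbitrary A) (Classical.arbitrary A),
    someRunSeq_isRun _ _ _⟩⟩

instance instNonemptyRunsX [Nonempty S] [Nonempty A] [Nonempty X] (T : S → A → X → PMF S) :
    Nonempty (RunsX T) :=
  ⟨⟨(Classical.arbitrary X,
      someRunSeq (evalT T (Classical.arbitrary X))
        (Classical.arbitrary S, Classical.arbitrary A) (Classical.arbitrary A)),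
    someRunSeq_isRun _ _ _⟩⟩

instance instNonemptyHistX [Nonempty S] [Nonempty X] (T : S → A → X → PMF S) :
    Nonempty (HistX T) :=
  ⟨⟨(Classical.arbitrary X, ([], Classical.arbitrary S)), trivial⟩⟩

instance instNonemptyHistOf [Nonempty S] (T : S → A → PMF S) :
    Nonempty (HistOf T) :=
  ⟨⟨([], Classical.arbitrary S), trivial⟩⟩

lemma iSup_eq_iSup_of_forall_exists {α : Type*} {ι ι' : Sort*} [SupSet α] {f : ι → α}
    {g : ι' → α} (hf : ∀ i, ∃ j, g j = f i) (hg : ∀ j, ∃ i, f i = g j) :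
    ⨆ i, f i = ⨆ j, g j :=
  congrArg sSup <| (Set.range_subset_iff.2 hf : Set.range f ⊆ Set.range g).antisymm
    (Set.range_subset_iff.2 hg)

section Transitions

variable {T : S → A → X → PMF S}

lemma indT_apply (T : S → A → X → PMF S) (s s' : S) (a : A) (x : X) :
    indT T (s, x) a (s', x) = T s a x s' := by
  rw [indT, PMF.map_apply, tsum_eq_single s' fun u hu => by simp [Prod.ext_iff, Ne.symm hu]]
  simp

lemma snd_eq_and_pos_of_indT_pos {s : S} {x : X} {a : A} {c : S × X}
    (h : 0 < indT T (s, x) a c) : c.2 = x ∧ 0 < T s a x c.1 := by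
  obtain ⟨u, hu, rfl⟩ : c ∈ (fun u => (u, x)) '' (T s a x).support := by
    rw [← PMF.support_map]; exact (PMF.mem_support_iff _ _).2 h.ne'
  exact ⟨rfl, pos_iff_ne_zero.2 ((PMF.mem_support_iff _ _).1 hu)⟩

end Transitions

section Histories

variable {T : S → A → X → PMF S}

lemma first_fHistSeq (x : X) (h : Hist S A) :
    (fHistSeq x h).first = (h.first, x) := by
  obtain ⟨_ | _, _⟩ := h <;> rfl

lemma obsHist_fHistSeq (x : X) (h : Hist S A) : obsHist (fHistSeq x h) = h := by
  simp [obsHist, fHistSeq, Function.comp_def]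

lemma isHistL_append_singleton {T₀ : S → A → PMF S} :
    ∀ (l : List (S × A)) {s : S} {a : A} {u : S}, IsHistL T₀ l s → 0 < T₀ s a u →
      IsHistL T₀ (l ++ [(s, a)]) u
  | [], _, _, _, _, hpos => ⟨hpos, trivial⟩
  | (s₀, a₀) :: l, s, a, u, ⟨h₀, hl⟩, hpos => by
      refine ⟨?_, isHistL_append_singleton l hl hpos⟩
      obtain _ | _ := l <;> exact h₀

lemma exists_fHistSeq_eq_of_isHistL (t' : S × X) :
    ∀ l' : List ((S × X) × A), IsHistL (indT T) l' t' →
      ∃ x h, IsHist (evalT T x) h ∧ fHistSeq x h = (l', t')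
  | [], _ => ⟨t'.2, ([], t'.1), trivial, rfl⟩
  | ((s, x₀), a) :: l', ⟨hpos, hl'⟩ => by
      obtain ⟨x, ⟨l, t⟩, hv, hf⟩ := exists_fHistSeq_eq_of_isHistL t' l' hl'
      rw [← hf, first_fHistSeq] at hpos
      obtain ⟨rfl, hT⟩ := snd_eq_and_pos_of_indT_pos hpos
      refine ⟨x, ((s, a) :: l, t), ⟨hT, hv⟩, ?_⟩
      simp only [fHistSeq, List.map_cons, Prod.mk.injEq] at hf ⊢
      exact ⟨by rw [hf.1], hf.2⟩

lemma exists_fHistSeq_eq_of_isHist {h' : Hist (S × X) A} (hv : IsHist (indT T) h') :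
    ∃ x h, IsHist (evalT T x) h ∧ fHistSeq x h = h' :=
  exists_fHistSeq_eq_of_isHistL h'.2 h'.1 hv

end Histories

section Runs

variable {T : S → A → X → PMF S}

lemma IsRun.snd_fst_eq_of_indT {ρ' : RunSeq (S × X) A} (hρ' : IsRun (indT T) ρ') (k : ℕ) :
    (ρ' k).1.2 = (ρ' 0).1.2 := by
  induction k with
  | zero => rfl
  | succ k ih => rw [← ih, (snd_eq_and_pos_of_indT_pos (hρ' k)).1]

lemma fRun_bijective (T : S → A → X → PMF S) : Function.Bijective (fRun T) := by
  refine ⟨fun ⟨⟨x₁, ρ₁⟩, _⟩ ⟨⟨x₂, ρ₂⟩, _⟩ heq => ?_, fun ⟨ρ', hρ'⟩ => ?_⟩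
  · have hseq : fSeq x₁ ρ₁ = fSeq x₂ ρ₂ := congrArg Subtype.val heq
    obtain rfl : x₁ = x₂ := congrArg (fun ρ => (ρ 0).1.2) hseq
    obtain rfl : ρ₁ = ρ₂ := funext fun k => by
      simpa [fSeq, Prod.ext_iff] using congrFun hseq k
    rfl
  · have hρ'_eq : ∀ k, (((ρ' k).1.1, (ρ' 0).1.2), (ρ' k).2) = ρ' k := fun k => by
      rw [← hρ'.snd_fst_eq_of_indT k]
    refine ⟨⟨((ρ' 0).1.2, fun k => ((ρ' k).1.1, (ρ' k).2)), fun k => ?_⟩,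
      Subtype.ext (funext hρ'_eq)⟩
    have hpos := hρ' k
    rw [← hρ'_eq k, ← hρ'_eq (k + 1)] at hpos
    exact (snd_eq_and_pos_of_indT_pos hpos).2

lemma fSeq_mem_coneSeq_fHistSeq_iff {x₁ x : X} {ρ : RunSeq S A} {h : Hist S A} :
    fSeq x₁ ρ ∈ ConeSeq (fHistSeq x h) ↔ x₁ = x ∧ ρ ∈ ConeSeq h := by
  obtain ⟨l, t⟩ := h
  simp only [ConeSeq, fSeq, fHistSeq, Set.mem_ofPred_eq, List.length_map, List.getElem_map,
    Prod.ext_iff]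
  grind

lemma fRun_preimage_cone (x : X) (h : Hist S A) :
    fRun T ⁻¹' Cone (indT T) (fHistSeq x h) = ConeX T x h := by
  ext ⟨⟨x₁, ρ⟩, hρ⟩
  exact fSeq_mem_coneSeq_fHistSeq_iff

end Runs

section Measurability

variable {T : S → A → X → PMF S}

lemma measurable_fRun (T : S → A → X → PMF S) : Measurable (fRun T) := by
  refine measurable_generateFrom ?_
  rintro _ ⟨h', hv', rfl⟩
  obtain ⟨x, h, hv, rfl⟩ := exists_fHistSeq_eq_of_isHist hv'
  rw [fRun_preimage_cone]
  exact MeasurableSpace.measurableSet_generateFrom ⟨x, h, hv, rfl⟩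

lemma measurable_invFun_fRun [Nonempty (RunsX T)] : Measurable (Function.invFun (fRun T)) := by
  refine measurable_generateFrom ?_
  rintro _ ⟨x, h, hv, rfl⟩
  rw [← fRun_preimage_cone, ← Set.preimage_comp,
    (Function.rightInverse_invFun (fRun_bijective T).2).comp_eq_id]
  exact MeasurableSpace.measurableSet_generateFrom ⟨_, isHist_fHistSeq T x h.1 h.2 hv, rfl⟩

lemma integral_comp_invFun_map_fRun [Nonempty (RunsX T)] (μ : Measure (RunsX T))
    {r : RunsX T → ℝ} (hr : Measurable r) :
    ∫ ρ, r (Function.invFun (fRun T) ρ) ∂(μ.map (fRun T)) = ∫ q, r q ∂μ := by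
  rw [integral_map (f := fun ρ => r (Function.invFun (fRun T) ρ)) (measurable_fRun T).aemeasurable
    (hr.comp measurable_invFun_fRun).aestronglyMeasurable]
  simp only [Function.leftInverse_invFun (fRun_bijective T).1 _]

end Measurability

lemma coneSeq_subset_coneSeq {h₁ h₂ : Hist S A} {ρ₀ : RunSeq S A} (h₀₁ : ρ₀ ∈ ConeSeq h₁)
    (h₀₂ : ρ₀ ∈ ConeSeq h₂) (hle : h₁.1.length ≤ h₂.1.length) :
    ConeSeq h₂ ⊆ ConeSeq h₁ := by
  rintro ρ ⟨hρ, hρ_last⟩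
  refine ⟨fun k hk => ?_, ?_⟩
  · rw [← h₀₁.1 k hk, h₀₂.1 k (hk.trans_le hle), hρ k (hk.trans_le hle)]
  · rcases hle.lt_or_eq with hlt | heq
    · rw [hρ _ hlt, ← h₀₂.1 _ hlt, h₀₁.2]
    · rw [heq, hρ_last, ← h₀₂.2, ← heq, h₀₁.2]

lemma isPiSystem_cones (T₀ : S → A → PMF S) :
    IsPiSystem {C : Set (Runs T₀) | ∃ h : Hist S A, IsHist T₀ h ∧ C = Cone T₀ h} := by
  rintro _ ⟨h₁, hv₁, rfl⟩ _ ⟨h₂, hv₂, rfl⟩ ⟨ρ₀, hρ₀₁, hρ₀₂⟩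
  rcases le_total h₁.1.length h₂.1.length with hle | hle
  · exact ⟨h₂, hv₂, Set.inter_eq_right.2 fun ρ hρ => coneSeq_subset_coneSeq hρ₀₁ hρ₀₂ hle hρ⟩
  · exact ⟨h₁, hv₁, Set.inter_eq_left.2 fun ρ hρ => coneSeq_subset_coneSeq hρ₀₂ hρ₀₁ hle hρ⟩

section ConeProbabilities

variable {T : S → A → X → PMF S} {x : X} {π' : Hist (S × X) A → PMF A}
  {σ : Hist S A → PMF A}

lemma coneProbAux_fHistSeq
    (hπ' : ∀ h : Hist S A, IsHist (evalT T x) h → π' (fHistSeq x h) = σ h) :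
    ∀ (l pre : List (S × A)) (t : S), IsHistL (evalT T x) l t →
      IsHistL (evalT T x) pre (Hist.first (l, t)) →
      coneProbAux (indT T) π' (fHistSeq x (pre, t)).1 (fHistSeq x (l, t)).1 (t, x) =
        coneProbAux (evalT T x) σ pre l t
  | [], _, _, _, _ => rfl
  | (s, a) :: l, pre, t, ⟨hpos, hl⟩, hpre => by
      have hrec := coneProbAux_fHistSeq hπ' l (pre ++ [(s, a)]) t hl
        (isHistL_append_singleton pre hpre hpos)
      have hfirst := first_fHistSeq (X := X) x (l, t)
      simp only [fHistSeq, List.map_append, List.map_cons, List.map_nil] at hrec hfirst ⊢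
      rw [coneProbAux, coneProbAux, hfirst, indT_apply, ← hrec]
      congr 2
      exact congrFun (congrArg DFunLike.coe (hπ' (pre, s) hpre)) a

lemma coneProb_fHistSeq {i : PMF S} {p : PMF X} {i' : PMF (S × X)}
    (hi' : ∀ s x, i' (s, x) = i s * p x)
    (hπ' : ∀ h : Hist S A, IsHist (evalT T x) h → π' (fHistSeq x h) = σ h)
    {h : Hist S A} (hv : IsHist (evalT T x) h) :
    coneProb (indT T) i' π' (fHistSeq x h) = p x * coneProb (evalT T x) i σ h := by
  obtain ⟨l, t⟩ := h
  rw [coneProb, coneProb, first_fHistSeq, hi', mul_right_comm, mul_comm (p x),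
    ← coneProbAux_fHistSeq hπ' l [] t hv trivial]
  rfl

end ConeProbabilities

section InducedMeasures

variable {T : S → A → X → PMF S}

lemma map_fRun_cone (μ : Measure (RunsX T)) {x : X} {h : Hist S A} (hv : IsHist (evalT T x) h) :
    μ.map (fRun T) (Cone (indT T) (fHistSeq x h)) = μ (ConeX T x h) := by
  rw [Measure.map_apply (measurable_fRun T), fRun_preimage_cone]
  exact MeasurableSpace.measurableSet_generateFrom ⟨_, isHist_fHistSeq T x h.1 h.2 hv, rfl⟩

lemma eq_map_fRun_of_cone_eq {i : PMF S} {p : PMF X} {i' : PMF (S × X)}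
    (hi' : ∀ s x, i' (s, x) = i s * p x) {σ : X × Hist S A → PMF A}
    {π' : Hist (S × X) A → PMF A}
    (hσπ' : ∀ x h, IsHist (evalT T x) h → π' (fHistSeq x h) = σ (x, h))
    (μ : Measure (RunsX T)) [IsProbabilityMeasure μ]
    (hμ : ∀ x h, IsHist (evalT T x) h →
      μ (ConeX T x h) = p x * coneProb (evalT T x) i (fun h => σ (x, h)) h)
    (ν : Measure (Runs (indT T))) [IsProbabilityMeasure ν]
    (hν : ∀ h', IsHist (indT T) h' → ν (Cone (indT T) h') = coneProb (indT T) i' π' h') :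
    ν = μ.map (fRun T) := by
  have : IsProbabilityMeasure (μ.map (fRun T)) :=
    Measure.isProbabilityMeasure_map (measurable_fRun T).aemeasurable
  refine ext_of_generate_finite _ rfl (isPiSystem_cones (indT T)) ?_ (by simp)
  rintro _ ⟨h', hv', rfl⟩
  obtain ⟨x, h, hv, rfl⟩ := exists_fHistSeq_eq_of_isHist hv'
  rw [hν _ hv', map_fRun_cone μ hv, hμ x h hv, coneProb_fHistSeq hi' (hσπ' x) hv]

end InducedMeasures

section PolicyCorrespondence

variable {T : S → A → X → PMF S}

/-- The policy `Φ(σ) = σ ∘ f⁻¹` of the induced POMDP: on a history `f(x, h)`, the parameter is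
read off the last state and `h` is its observation. -/
def toInducedPolicy (σ : X × Hist S A → PMF A) : Hist (S × X) A → PMF A :=
  fun h' => σ (h'.2.2, obsHist h')

lemma toInducedPolicy_fHistSeq (σ : X × Hist S A → PMF A) (x : X) (h : Hist S A) :
    toInducedPolicy σ (fHistSeq x h) = σ (x, h) := by
  rw [toInducedPolicy, obsHist_fHistSeq]
  rfl

lemma toInducedPolicy_eq_of_obsHist_eq {σ : X × Hist S A → PMF A}
    (hσ : ∀ (x y : X) (h : Hist S A), IsHist (evalT T x) h → IsHist (evalT T y) h →
      σ (x, h) = σ (y, h))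
    {h₁ h₂ : Hist (S × X) A} (hv₁ : IsHist (indT T) h₁) (hv₂ : IsHist (indT T) h₂)
    (hobs : obsHist h₁ = obsHist h₂) :
    toInducedPolicy σ h₁ = toInducedPolicy σ h₂ := by
  obtain ⟨x₁, h, hw₁, rfl⟩ := exists_fHistSeq_eq_of_isHist hv₁
  obtain ⟨x₂, h₂, hw₂, rfl⟩ := exists_fHistSeq_eq_of_isHist hv₂
  rw [obsHist_fHistSeq, obsHist_fHistSeq] at hobs
  subst hobs
  rw [toInducedPolicy_fHistSeq, toInducedPolicy_fHistSeq, hσ x₁ x₂ h hw₁ hw₂]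

lemma eq_of_isHist_of_obsHist_invariant {π' : Hist (S × X) A → PMF A}
    (hπ' : ∀ h₁ h₂ : Hist (S × X) A, IsHist (indT T) h₁ → IsHist (indT T) h₂ →
      obsHist h₁ = obsHist h₂ → π' h₁ = π' h₂)
    {x y : X} {h : Hist S A} (hx : IsHist (evalT T x) h) (hy : IsHist (evalT T y) h) :
    π' (fHistSeq x h) = π' (fHistSeq y h) :=
  hπ' _ _ (isHist_fHistSeq T x h.1 h.2 hx) (isHist_fHistSeq T y h.1 h.2 hy)
    (by rw [obsHist_fHistSeq, obsHist_fHistSeq])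

end PolicyCorrespondence

theorem eps_optimal_correspondence_general [Nonempty S] [Nonempty A] [Nonempty X]
    (T : S → A → X → PMF S) (i : PMF S) (p : PMF X)
    (i' : PMF (S × X)) (hi' : ∀ s x, i' (s, x) = i s * p x)
    (PM : (X × Hist S A → PMF A) → Measure (RunsX T))
    (hPMprob : ∀ πX, IsProbabilityMeasure (PM πX))
    (hPM : ∀ (πX : X × Hist S A → PMF A) (x : X) (h : Hist S A), IsHist (evalT T x) h →
      PM πX (ConeX T x h) = p x * coneProb (evalT T x) i (fun h => πX (x, h)) h)
    (PO : (Hist (S × X) A → PMF A) → Measure (Runs (indT T)))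
    (hPOprob : ∀ π', IsProbabilityMeasure (PO π'))
    (hPO : ∀ (π' : Hist (S × X) A → PMF A) (h' : Hist (S × X) A), IsHist (indT T) h' →
      PO π' (Cone (indT T) h') = coneProb (indT T) i' π' h')
    (r : RunsX T → ℝ) (hr : Measurable r)
    (πX : X × Hist S A → PMF A)
    (π' : Hist (S × X) A → PMF A)
    (hPhi : ∀ (x : X) (h : Hist S A), IsHist (evalT T x) h → π' (fHistSeq x h) = πX (x, h))
    (ε : ℝ) :
    |(⨆ σ : {π : X × Hist S A → PMF A // ∀ (x y : X) (h : Hist S A),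
          IsHist (evalT T x) h → IsHist (evalT T y) h → π (x, h) = π (y, h)},
        ∫ q, r q ∂(PM σ.1)) - ∫ q, r q ∂(PM πX)| ≤ ε ↔
    |(⨆ σ' : {π : Hist (S × X) A → PMF A // ∀ h1 h2 : Hist (S × X) A,
          IsHist (indT T) h1 → IsHist (indT T) h2 → obsHist h1 = obsHist h2 → π h1 = π h2},
        ∫ ρ, r (Function.invFun (fRun T) ρ) ∂(PO σ'.1)) -
      ∫ ρ, r (Function.invFun (fRun T) ρ) ∂(PO π')| ≤ ε := by
  have hvalue : ∀ σ π'', (∀ x h, IsHist (evalT T x) h → π'' (fHistSeq x h) = σ (x, h)) →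
      ∫ ρ, r (Function.invFun (fRun T) ρ) ∂(PO π'') = ∫ q, r q ∂(PM σ) := by
    intro σ π'' hσπ''
    have := hPMprob σ
    have := hPOprob π''
    rw [eq_map_fRun_of_cone_eq hi' hσπ'' (PM σ) (hPM σ) (PO π'') (hPO π''),
      integral_comp_invFun_map_fRun _ hr]
  rw [hvalue πX π' hPhi, iSup_eq_iSup_of_forall_exists ?toPOMDP ?toPMDP]
  case toPOMDP => exact fun σ => ⟨⟨toInducedPolicy σ.1, fun _ _ =>
    toInducedPolicy_eq_of_obsHist_eq σ.2⟩, hvalue _ _ fun x h _ => toInducedPolicy_fHistSeq σ.1 x h⟩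
  case toPMDP => exact fun σ' => ⟨⟨fun q => σ'.1 (fHistSeq q.1 q.2), fun _ _ _ =>
    eq_of_isHist_of_obsHist_invariant σ'.2⟩, (hvalue _ _ fun _ _ _ => rfl).symm⟩

/-- Let `M` be a pMDP with induced POMDP `M'`, `p ∈ Dist(X)`,
`r : Runs_X → ℝ` a measurable objective, `r' = r ∘ f⁻¹`, `i'(s,x) = i(s)·p(x)`, and
`ε ≥ 0`. A pMDP policy `π_X` is expectation ε-optimal for `M`
(`|Val^M(p,r) − E^M_{π_X,i,p}(r)| ≤ ε`) if and only if `π' = Φ(π_X) = π_X ∘ f⁻¹` is an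
ε-solution of `M'` with respect to `r'` (`|Val^{M'}(r') − E^{M'}_{π',i'}(r')| ≤ ε`). -/
theorem eps_optimal_correspondence [Nonempty S] [Nonempty A] [Nonempty X]
    (T : S → A → X → PMF S) (i : PMF S) (p : PMF X)
    (i' : PMF (S × X)) (hi' : ∀ s x, i' (s, x) = i s * p x)
    (PM : (X × Hist S A → PMF A) → Measure (RunsX T))
    (hPMprob : ∀ πX, IsProbabilityMeasure (PM πX))
    (hPM : ∀ (πX : X × Hist S A → PMF A) (x : X) (h : Hist S A), IsHist (evalT T x) h →
      PM πX (ConeX T x h) = p x * coneProb (evalT T x) i (fun h => πX (x, h)) h)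
    (PO : (Hist (S × X) A → PMF A) → Measure (Runs (indT T)))
    (hPOprob : ∀ π', IsProbabilityMeasure (PO π'))
    (hPO : ∀ (π' : Hist (S × X) A → PMF A) (h' : Hist (S × X) A), IsHist (indT T) h' →
      PO π' (Cone (indT T) h') = coneProb (indT T) i' π' h')
    (r : RunsX T → ℝ) (hr : Measurable r)
    (πX : X × Hist S A → PMF A)
    (hind : ∀ (x y : X) (h : Hist S A), IsHist (evalT T x) h → IsHist (evalT T y) h →
      πX (x, h) = πX (y, h))
    (π' : Hist (S × X) A → PMF A)
    (hobs : ∀ h1 h2 : Hist (S × X) A, IsHist (indT T) h1 → IsHist (indT T) h2 →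
      obsHist h1 = obsHist h2 → π' h1 = π' h2)
    (hPhi : ∀ (x : X) (h : Hist S A), IsHist (evalT T x) h → π' (fHistSeq x h) = πX (x, h))
    (ε : ℝ) (hε : 0 ≤ ε) :
    |(⨆ σ : {π : X × Hist S A → PMF A // ∀ (x y : X) (h : Hist S A),
          IsHist (evalT T x) h → IsHist (evalT T y) h → π (x, h) = π (y, h)},
        ∫ q, r q ∂(PM σ.1)) - ∫ q, r q ∂(PM πX)| ≤ ε ↔
    |(⨆ σ' : {π : Hist (S × X) A → PMF A // ∀ h1 h2 : Hist (S × X) A,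
          IsHist (indT T) h1 → IsHist (indT T) h2 → obsHist h1 = obsHist h2 → π h1 = π h2},
        ∫ ρ, r (Function.invFun (fRun T) ρ) ∂(PO σ'.1)) -
      ∫ ρ, r (Function.invFun (fRun T) ρ) ∂(PO π')| ≤ ε :=
  eps_optimal_correspondence_general T i p i' hi' PM hPMprob hPM PO hPOprob hPO r hr πX π' hPhi ε

end PMDPEncoding
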